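/- arXiv:1208.0316 — 6 statements merged into one kernel-verified Lean document; each statement's English description precedes it below -/
import Mathlib

section
/- Suppose q : [0,∞) → ℝ is differentiable and satisfies q'(t) = ρ(s(t)) - f(q(t)), where ρ : ℝ≥0 → ℝ≥0 is continuous, increasing, bounded with supremum ρᵐ > 0, f is continuous strictly increasing on (Q⁰, ∞), s(t) ≤ Mᵐ for all t with ρ(Mᵐ) < ρᵐ, and Qᵐ := f⁻¹(ρᵐ). If q(0) > Qᵐ, then there is a finite time t₁ ≥ 0 such that q(t) < Qᵐ for all t ≥ t₁. -/
/-! While `q ≥ Qᵐ`, monotonicity gives `q' = ρ(s) - f(q) ≤ ρ(Mᵐ) - ρᵐ < 0`, so `q` falls at a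
uniform rate and must drop below `Qᵐ` within finite time. After that it cannot come back: by the
fencing theorem `q` stays `≤ Qᵐ`, and a later touching point would be a local maximum of `q`,
where the derivative vanishes instead of being negative. -/

open Set

section Fencing

variable {q : ℝ → ℝ} {a c : ℝ}

theorem exists_lt_of_deriv_le_neg_of_le (hq : Differentiable ℝ q) {δ : ℝ} (hδ : 0 < δ)
    (hderiv : ∀ t ≥ a, c ≤ q t → deriv q t ≤ -δ) : ∃ t ≥ a, q t < c := by
  by_contra! hge
  have hmvt := (convex_Ici a).image_sub_le_mul_sub_of_deriv_le hq.continuous.continuousOn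
    hq.differentiableOn (fun x hx => by
      rw [interior_Ici] at hx
      exact hderiv x hx.le (hge x hx.le))
  -- by time `t` a uniform fall at rate `δ` would overshoot the gap `q a - c` by `δ`
  set t := a + (q a - c) / δ + 1
  have hta : a ≤ t := by
    have : 0 ≤ (q a - c) / δ := div_nonneg (by linarith [hge a le_rfl]) hδ.le
    linarith
  have hdrop : -δ * (t - a) = -(q a - c) - δ := by
    simp only [t]
    field_simp
    ring
  have := hmvt a self_mem_Ici t hta hta
  linarith [hge t hta]

theorem lt_of_deriv_neg_of_eq (hq : Differentiable ℝ q)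
    (hderiv : ∀ t ≥ a, q t = c → deriv q t < 0) (ha : q a < c) : ∀ t ≥ a, q t < c := by
  have hle : ∀ t ≥ a, q t ≤ c := fun t ht =>
    image_le_of_deriv_right_lt_deriv_boundary hq.continuous.continuousOn
      (fun x _ => (hq x).hasDerivAt.hasDerivWithinAt) ha.le (fun _ => hasDerivAt_const _ c)
      (fun x hx => by simpa using hderiv x hx.1) ⟨ht, le_rfl⟩
  intro t ht
  rcases ht.eq_or_lt with rfl | hat
  · exact ha
  refine (hle t ht).lt_of_ne fun hqt => (hderiv t ht hqt).ne ?_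
  have hmax : IsLocalMax q t :=
    Filter.eventually_of_mem (Ioi_mem_nhds hat) fun u hu => hqt ▸ hle u (le_of_lt hu)
  exact hmax.deriv_eq_zero

end Fencing

theorem deriv_quota_le_of_le {ρ f s q : ℝ → ℝ} {ρm Mm Q0 Qm t : ℝ} (hρmono : Monotone ρ)
    (hfmono : StrictMonoOn f (Ioi Q0)) (hQm : Qm ∈ Ioi Q0) (hfQm : f Qm = ρm) (hst : s t ≤ Mm)
    (hode : deriv q t = ρ (s t) - f (q t)) (hqt : Qm ≤ q t) : deriv q t ≤ -(ρm - ρ Mm) := by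
  have huptake : ρ (s t) ≤ ρ Mm := hρmono hst
  have hquota : ρm ≤ f (q t) :=
    hfQm ▸ hfmono.monotoneOn hQm (lt_of_lt_of_le (mem_Ioi.mp hQm) hqt) hqt
  rw [hode]
  linarith

theorem quota_upper_bound_general (ρ f : ℝ → ℝ) (s q : ℝ → ℝ) (ρm Mm Q0 Qm : ℝ)
    (hρmono : Monotone ρ)
    (hfmono : StrictMonoOn f (Set.Ioi Q0))
    (hQm : Qm ∈ Set.Ioi Q0) (hfQm : f Qm = ρm)
    (hs : ∀ t ≥ (0:ℝ), 0 ≤ s t ∧ s t ≤ Mm)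
    (hMm : ρ Mm < ρm)
    (hq : Differentiable ℝ q)
    (hode : ∀ t ≥ (0:ℝ), deriv q t = ρ (s t) - f (q t)) :
    ∃ t₁ ≥ (0:ℝ), ∀ t ≥ t₁, q t < Qm := by
  have hderiv : ∀ t ≥ (0:ℝ), Qm ≤ q t → deriv q t ≤ -(ρm - ρ Mm) := fun t ht =>
    deriv_quota_le_of_le hρmono hfmono hQm hfQm (hs t ht).2 (hode t ht)
  obtain ⟨t₁, ht₁, hqt₁⟩ := exists_lt_of_deriv_le_neg_of_le hq (sub_pos.mpr hMm) hderiv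
  refine ⟨t₁, ht₁, lt_of_deriv_neg_of_eq hq (fun t ht hqt => ?_) hqt₁⟩
  linarith [hderiv t (ht₁.trans ht) hqt.ge]

theorem quota_upper_bound (ρ f : ℝ → ℝ) (s q : ℝ → ℝ) (ρm Mm Q0 Qm : ℝ)
    (hρcont : Continuous ρ) (hρmono : Monotone ρ)
    (hρbdd : ∀ x ≥ (0:ℝ), ρ x ≤ ρm) (hρm : 0 < ρm)
    (hfmono : StrictMonoOn f (Set.Ioi Q0)) (hfcont : ContinuousOn f (Set.Ioi Q0))
    (hQm : Qm ∈ Set.Ioi Q0) (hfQm : f Qm = ρm)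
    (hs : ∀ t ≥ (0:ℝ), 0 ≤ s t ∧ s t ≤ Mm)
    (hMm : ρ Mm < ρm)
    (hq : Differentiable ℝ q)
    (hode : ∀ t ≥ (0:ℝ), deriv q t = ρ (s t) - f (q t))
    (hq0 : q 0 > Qm) :
    ∃ t₁ ≥ (0:ℝ), ∀ t ≥ t₁, q t < Qm :=
  quota_upper_bound_general ρ f s q ρm Mm Q0 Qm hρmono hfmono hQm hfQm hs hMm hq hode
end

section
/- Let φ : [0, s_in] → ℝ be continuous and strictly decreasing with φ(0) = D·s_in > 0 and φ(s_in) < 0. Then there exists a unique ŝ ∈ (0, s_in) with φ(ŝ) = D·s_in/2, and for any differentiable s : [0,∞) → [0, s_in] satisfying s'(t) ≥ φ(s(t)) for all t: (i) the set {t : s(t) ≥ ŝ} is forward invariant (if s(t₀) ≥ ŝ then s(t) ≥ ŝ for all t ≥ t₀), and (ii) there exists a finite time t₀ such that s(t₀) ≥ ŝ. -/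
/-!
The level `ŝ` where `φ = D·s_in/2` exists and is unique by the intermediate value theorem and
strict monotonicity. Wherever `s ≤ ŝ` we have `s' ≥ φ(s) ≥ φ(ŝ) = D·s_in/2 > 0`: hence a trajectory
cannot cross the level `ŝ` downwards, and a trajectory staying below `ŝ` would grow at least
linearly, contradicting `s ≤ s_in`.
-/

open Set

theorem existsUnique_mem_Ioo_eq_of_strictAntiOn {α δ : Type*}
    [ConditionallyCompleteLinearOrder α] [TopologicalSpace α] [OrderTopology α]
    [DenselyOrdered α] [LinearOrder δ] [TopologicalSpace δ] [OrderClosedTopology δ]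
    {f : α → δ} {a b : α} {y : δ} (hab : a ≤ b) (hf : ContinuousOn f (Icc a b))
    (hanti : StrictAntiOn f (Icc a b)) (hy : y ∈ Ioo (f b) (f a)) :
    ∃! x, x ∈ Ioo a b ∧ f x = y := by
  obtain ⟨x, hx, rfl⟩ := intermediate_value_Ioo' hab hf hy
  exact ⟨x, ⟨hx, rfl⟩, fun x' hx' =>
    hanti.injOn (Ioo_subset_Icc_self hx'.1) (Ioo_subset_Icc_self hx) hx'.2⟩

theorem le_of_le_of_deriv_pos_at_level {s : ℝ → ℝ} {c t₀ : ℝ} (hs : Differentiable ℝ s)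
    (hlevel : ∀ t ≥ t₀, s t = c → 0 < deriv s t) (h₀ : c ≤ s t₀) :
    ∀ t ≥ t₀, c ≤ s t := fun _ ht =>
  image_le_of_deriv_right_lt_deriv_boundary (f := fun _ => c) (f' := fun _ => 0)
    continuousOn_const (fun _ _ => hasDerivWithinAt_const _ _ _) h₀
    (fun x => (hs x).hasDerivAt) (fun x hx heq => hlevel x hx.1 heq.symm) ⟨ht, le_rfl⟩

theorem exists_ge_le_of_deriv_ge_below {s : ℝ → ℝ} {a c M ε : ℝ} (hs : Differentiable ℝ s)
    (hM : ∀ t ≥ a, s t ≤ M) (hε : 0 < ε) (hgrow : ∀ t ≥ a, s t < c → ε ≤ deriv s t) :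
    ∃ t ≥ a, c ≤ s t := by
  by_contra! hbelow
  have hlinear : ∀ t ≥ a, ε * (t - a) ≤ s t - s a := fun t ht =>
    (convex_Ici a).mul_sub_le_image_sub_of_le_deriv hs.continuous.continuousOn
      hs.differentiableOn
      (fun x hx => by
        rw [interior_Ici] at hx
        exact hgrow x hx.le (hbelow x hx.le)) a self_mem_Ici t ht ht
  set T := a + (M - s a + 1) / ε
  have hT : a ≤ T := le_add_of_nonneg_right (div_nonneg (by linarith [hM a le_rfl]) hε.le)
  have hgain : ε * (T - a) = M - s a + 1 := by
    simp only [T, add_sub_cancel_left]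
    field_simp
  linarith [hlinear T hT, hM T hT]

theorem substrate_lower_bound (φ : ℝ → ℝ) (D sin : ℝ) (hD : 0 < D) (hsin : 0 < sin)
    (hcont : ContinuousOn φ (Set.Icc 0 sin))
    (hanti : StrictAntiOn φ (Set.Icc 0 sin))
    (hφ0 : φ 0 = D * sin)
    (hφsin : φ sin < 0) :
    ∃ shat ∈ Set.Ioo 0 sin, φ shat = D * sin / 2 ∧
      (∀ s' ∈ Set.Ioo 0 sin, φ s' = D * sin / 2 → s' = shat) ∧
      ∀ s : ℝ → ℝ, Differentiable ℝ s → (∀ t ≥ (0:ℝ), s t ∈ Set.Icc 0 sin) →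
        (∀ t ≥ (0:ℝ), deriv s t ≥ φ (s t)) →
        ((∀ t₀ ≥ (0:ℝ), s t₀ ≥ shat → ∀ t ≥ t₀, s t ≥ shat) ∧
         ∃ t₀ ≥ (0:ℝ), s t₀ ≥ shat) := by
  have hc : 0 < D * sin / 2 := by positivity
  obtain ⟨shat, ⟨hshat, hφshat⟩, huniq⟩ := existsUnique_mem_Ioo_eq_of_strictAntiOn
    (y := D * sin / 2) hsin.le hcont hanti ⟨by linarith, by rw [hφ0]; linarith⟩
  refine ⟨shat, hshat, hφshat, fun s' hs' h => huniq s' ⟨hs', h⟩, fun s hs hrange hder => ?_⟩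
  have hderiv_below : ∀ t ≥ 0, s t ≤ shat → D * sin / 2 ≤ deriv s t := fun t ht hle =>
    hφshat ▸ (hanti.antitoneOn (hrange t ht) (Ioo_subset_Icc_self hshat) hle).trans (hder t ht)
  exact ⟨fun t₀ ht₀ h₀ => le_of_le_of_deriv_pos_at_level hs
      (fun t ht heq => hc.trans_le (hderiv_below t (ht₀.trans ht) heq.le)) h₀,
    exists_ge_le_of_deriv_ge_below hs (fun t ht => (hrange t ht).2) hc
      (fun t ht hlt => hderiv_below t ht hlt.le)⟩
end

section
/- Let s, q : [0,∞) → ℝ be differentiable with q'(t) = g(s(t)) - h(q(t)), where g, h are continuous strictly increasing functions with h invertible on the range of g and Q := h⁻¹ ∘ g. Suppose |s'(t)| ≤ B for some B > 0 and s does not converge to s₀ as t → ∞, in the sense that there is η > 0 with |s(t) - s₀| > η for arbitrarily large t. Then q does not converge to Q(s₀) as t → ∞. -/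
/-!
If `q → Q s₀`, then `h ∘ q → g s₀`. Since `s` is uniformly continuous, every time `s` is more than
`η` above `s₀` it stays more than `η / 2` above `s₀` on a window of fixed length `L`; there
`g ∘ s ≥ g (s₀ + η / 2) > g s₀`, so eventually `q' = g ∘ s - h ∘ q` is bounded below by a positive
constant on the whole window, and `q` increases by a fixed amount across it. This contradicts
`q (t + L) - q t → 0`. Excursions below `s₀` are the same case after reflecting `x ↦ -x`.
-/

open Filter Set Topology

theorem not_tendsto_of_frequently_le_deriv_on_Icc {q : ℝ → ℝ} {ℓ c L : ℝ}
    (hq : Differentiable ℝ q) (hc : 0 < c) (hL : 0 < L)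
    (hfreq : ∃ᶠ t in atTop, ∀ τ ∈ Icc t (t + L), c ≤ deriv q τ) :
    ¬ Tendsto q atTop (𝓝 ℓ) := by
  intro hlim
  have hincr : Tendsto (fun t => q (t + L) - q t) atTop (𝓝 0) := by
    simpa using (hlim.comp (tendsto_atTop_add_const_right _ L tendsto_id)).sub hlim
  obtain ⟨t, hderiv, hsmall⟩ :=
    (hfreq.and_eventually (hincr.eventually_lt_const (mul_pos hc hL))).exists
  have hgrowth : c * (t + L - t) ≤ q (t + L) - q t :=
    (convex_Icc t (t + L)).mul_sub_le_image_sub_of_le_deriv hq.continuous.continuousOn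
      hq.differentiableOn (fun τ hτ => hderiv τ (interior_subset hτ))
      t (left_mem_Icc.2 (by linarith)) (t + L) (right_mem_Icc.2 (by linarith)) (by linarith)
  linarith

theorem UniformContinuous.exists_pos_forall_Icc_abs_sub_lt {s : ℝ → ℝ} (hs : UniformContinuous s)
    {ε : ℝ} (hε : 0 < ε) : ∃ L > 0, ∀ t, ∀ τ ∈ Icc t (t + L), |s τ - s t| < ε := by
  obtain ⟨δ, hδ, hdist⟩ := Metric.uniformContinuous_iff.1 hs ε hε
  refine ⟨δ / 2, half_pos hδ, fun t τ hτ => ?_⟩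
  have : dist τ t < δ := by
    rw [Real.dist_eq, abs_of_nonneg (by linarith [hτ.1])]; linarith [hτ.2]
  simpa [Real.dist_eq] using hdist this

theorem not_tendsto_of_frequently_add_lt {g h s q : ℝ → ℝ} {s₀ ℓ η : ℝ}
    (hgmono : StrictMono g) (hhcont : Continuous h) (hℓ : h ℓ = g s₀)
    (hs : UniformContinuous s) (hqdiff : Differentiable ℝ q)
    (hode : ∀ t, deriv q t = g (s t) - h (q t))
    (hη : 0 < η) (hfreq : ∃ᶠ t in atTop, s₀ + η < s t) :
    ¬ Tendsto q atTop (𝓝 ℓ) := by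
  intro hlim
  obtain ⟨L, hL, hwindow⟩ := hs.exists_pos_forall_Icc_abs_sub_lt (half_pos hη)
  set δ := g (s₀ + η / 2) - g s₀
  have hδ : 0 < δ := sub_pos.2 (hgmono (by linarith))
  have hhq : ∀ᶠ τ in atTop, h (q τ) < g s₀ + δ / 2 := by
    refine ((hhcont.tendsto ℓ).comp hlim).eventually_lt_const ?_
    rw [hℓ]; linarith
  obtain ⟨T, hT⟩ := eventually_atTop.1 hhq
  refine not_tendsto_of_frequently_le_deriv_on_Icc hqdiff (half_pos hδ) hL ?_ hlim
  refine (hfreq.and_eventually (eventually_ge_atTop T)).mono fun t ⟨hst, htT⟩ τ hτ => ?_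
  have hsτ : s₀ + η / 2 ≤ s τ := by linarith [(abs_lt.1 (hwindow t τ hτ)).1]
  have hgτ : g (s₀ + η / 2) ≤ g (s τ) := hgmono.monotone hsτ
  linarith [hode τ, hT τ (htT.trans hτ.1)]

theorem nonconvergence_transfer_general (g h Q : ℝ → ℝ) (s q : ℝ → ℝ) (B s₀ : ℝ)
    (hgmono : StrictMono g)
    (hhcont : Continuous h)
    (hQ : ∀ x, h (Q x) = g x)
    (hsdiff : Differentiable ℝ s) (hqdiff : Differentiable ℝ q)
    (hode : ∀ t, deriv q t = g (s t) - h (q t))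
    (hbound : ∀ t, |deriv s t| ≤ B)
    (hnc : ∃ η > (0:ℝ), ∀ T : ℝ, ∃ t ≥ T, |s t - s₀| > η) :
    ¬ Filter.Tendsto q Filter.atTop (nhds (Q s₀)) := by
  obtain ⟨η, hη, hfar⟩ := hnc
  have hs : UniformContinuous s :=
    (lipschitzWith_of_nnnorm_deriv_le (C := B.toNNReal) hsdiff fun t => by
      rw [← NNReal.coe_le_coe, coe_nnnorm, Real.coe_toNNReal']
      exact le_max_of_le_left (hbound t)).uniformContinuous
  have hfreq : ∃ᶠ t in atTop, s₀ + η < s t ∨ s t < s₀ - η :=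
    frequently_atTop.2 fun T => (hfar T).imp fun t ⟨htT, hst⟩ =>
      ⟨htT, by rcases lt_abs.1 hst with hpos | hneg <;> [left; right] <;> linarith⟩
  rcases frequently_or_distrib.1 hfreq with hup | hdown
  · exact not_tendsto_of_frequently_add_lt hgmono hhcont (hQ s₀) hs hqdiff hode hη hup
  · intro hlim
    have hode_neg : ∀ t, deriv (-q) t = -g (-(-s t)) - -h (-(-q t)) := fun t => by
      simp only [deriv.neg, hode, neg_neg]; ring
    exact not_tendsto_of_frequently_add_lt (g := fun x => -g (-x)) (h := fun x => -h (-x))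
      (s := fun t => -s t) (s₀ := -s₀) (fun x y hxy => neg_lt_neg (hgmono (neg_lt_neg hxy)))
      (by fun_prop) (by simp [hQ]) hs.neg hqdiff.neg hode_neg
      hη (hdown.mono fun t ht => by linarith) hlim.neg

theorem nonconvergence_transfer (g h Q : ℝ → ℝ) (s q : ℝ → ℝ) (B s₀ : ℝ)
    (hgcont : Continuous g) (hgmono : StrictMono g)
    (hhcont : Continuous h) (hhmono : StrictMono h)
    (hQ : ∀ x, h (Q x) = g x)
    (hsdiff : Differentiable ℝ s) (hqdiff : Differentiable ℝ q)
    (hode : ∀ t, deriv q t = g (s t) - h (q t))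
    (hB : 0 < B) (hbound : ∀ t, |deriv s t| ≤ B)
    (hnc : ∃ η > (0:ℝ), ∀ T : ℝ, ∃ t ≥ T, |s t - s₀| > η) :
    ¬ Filter.Tendsto q Filter.atTop (nhds (Q s₀)) :=
  nonconvergence_transfer_general g h Q s q B s₀ hgmono hhcont hQ hsdiff hqdiff hode hbound hnc
end

section
/- Let n ≥ 1, and let a₁,…,aₙ > 0 and b₁,…,bₙ > 0 be real numbers. Consider the n×n real matrix J with entries J_{jl} = -aⱼ - bⱼ·δ_{jl} (i.e. J_{jj} = -aⱼ - bⱼ and J_{jl} = -aⱼ for l ≠ j). Then every (complex) eigenvalue λ of J is real and satisfies λ ≤ -min_j bⱼ < 0. -/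
/-!
An eigenvector `v` of `J = -diag b - a 𝟙ᵀ` satisfies `(μ + b j) v j = -a j ∑ v`. Pairing this
with the weights `conj (v j) / a j` gives
`μ ∑ |v j|² / a j = -(∑ b j |v j|² / a j + |∑ v|²)`,
the Rayleigh quotient of the symmetric matrix `diag √a⁻¹ J diag √a`. Hence `μ` is real and at
most `-min b`.
-/

open Matrix

namespace Contois

variable {ι : Type*} [Fintype ι] [DecidableEq ι] {a b : ι → ℝ} {J : Matrix ι ι ℂ}

theorem mulVec_apply (hJ : ∀ j l, J j l = -(a j : ℂ) - if j = l then (b j : ℂ) else 0)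
    (v : ι → ℂ) (j : ι) : (J *ᵥ v) j = -(a j : ℂ) * ∑ l, v l - b j * v j := by
  simp only [mulVec, dotProduct, hJ, sub_mul, Finset.sum_sub_distrib, ← Finset.mul_sum, ite_mul,
    zero_mul, Finset.sum_ite_eq, Finset.mem_univ, if_true]

theorem eigenvalue_mul_weighted_normSq
    (hJ : ∀ j l, J j l = -(a j : ℂ) - if j = l then (b j : ℂ) else 0)
    (ha : ∀ j, a j ≠ 0) {μ : ℂ} {v : ι → ℂ} (heig : J *ᵥ v = μ • v) :
    μ * ((∑ j, Complex.normSq (v j) / a j : ℝ) : ℂ) =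
      -((∑ j, b j * (Complex.normSq (v j) / a j) + Complex.normSq (∑ l, v l) : ℝ) : ℂ) := by
  have hrow (j : ι) : μ * (Complex.normSq (v j) / a j : ℝ) =
      -(∑ l, v l) * starRingEnd ℂ (v j) - (b j * (Complex.normSq (v j) / a j) : ℝ) := by
    have h := congrFun heig j
    rw [mulVec_apply hJ, Pi.smul_apply, smul_eq_mul] at h
    have haj : (a j : ℂ) ≠ 0 := Complex.ofReal_ne_zero.mpr (ha j)
    push_cast
    rw [Complex.normSq_eq_conj_mul_self]
    field_simp
    linear_combination (starRingEnd ℂ (v j)) * h.symm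
  rw [Complex.ofReal_add, Complex.ofReal_sum, Complex.ofReal_sum, Finset.mul_sum,
    Finset.sum_congr rfl fun j _ => hrow j, Finset.sum_sub_distrib,
    ← Finset.mul_sum, ← map_sum, neg_mul, Complex.mul_conj]
  push_cast
  ring

theorem exists_real_eigenvalue_le
    (hJ : ∀ j l, J j l = -(a j : ℂ) - if j = l then (b j : ℂ) else 0)
    (ha : ∀ j, 0 < a j) {m : ℝ} (hm : ∀ j, m ≤ b j) {μ : ℂ} {v : ι → ℂ} (hv : v ≠ 0)
    (heig : J *ᵥ v = μ • v) : ∃ r : ℝ, μ = r ∧ r ≤ -m := by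
  set P := ∑ j, Complex.normSq (v j) / a j
  set Q := ∑ j, b j * (Complex.normSq (v j) / a j)
  have hP : 0 < P := by
    obtain ⟨j, hj⟩ := Function.ne_iff.mp hv
    exact Finset.sum_pos' (fun i _ => div_nonneg (Complex.normSq_nonneg _) (ha i).le)
      ⟨j, Finset.mem_univ j, div_pos (Complex.normSq_pos.mpr hj) (ha j)⟩
  have hQ : m * P ≤ Q := by
    rw [Finset.mul_sum]
    exact Finset.sum_le_sum fun j _ =>
      mul_le_mul_of_nonneg_right (hm j) (div_nonneg (Complex.normSq_nonneg _) (ha j).le)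
  refine ⟨-(Q + Complex.normSq (∑ l, v l)) / P, ?_, ?_⟩
  · have h := eigenvalue_mul_weighted_normSq hJ (fun j => (ha j).ne') heig
    have hP' : (P : ℂ) ≠ 0 := Complex.ofReal_ne_zero.mpr hP.ne'
    rw [Complex.ofReal_div, eq_div_iff hP', h, Complex.ofReal_neg]
  · rw [div_le_iff₀ hP]
    nlinarith [Complex.normSq_nonneg (∑ l, v l)]

end Contois

theorem contois_jacobian_eigenvalues (n : ℕ) (hn : 0 < n) (a b : Fin n → ℝ)
    (ha : ∀ j, 0 < a j) (hb : ∀ j, 0 < b j)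
    (J : Matrix (Fin n) (Fin n) ℂ)
    (hJ : ∀ j l, J j l = -(a j : ℂ) - (if j = l then (b j : ℂ) else 0))
    (μ : ℂ) (v : Fin n → ℂ) (hv : v ≠ 0)
    (heig : J.mulVec v = μ • v) :
    ∃ r : ℝ, μ = (r : ℂ) ∧
      r ≤ -(Finset.inf' Finset.univ ⟨⟨0, hn⟩, Finset.mem_univ _⟩ b) ∧ r < 0 := by
  set m := Finset.inf' Finset.univ ⟨⟨0, hn⟩, Finset.mem_univ _⟩ b
  have hmin : 0 < m := (Finset.lt_inf'_iff _).mpr fun j _ => hb j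
  have hmb : ∀ j, m ≤ b j := fun j => Finset.inf'_le b (Finset.mem_univ j)
  obtain ⟨r, hμ, hr⟩ := Contois.exists_real_eigenvalue_le hJ ha hmb hv heig
  exact ⟨r, hμ, hr, by linarith⟩
end

section
/- Let n ≥ 1, a₀, a₁,…,aₙ > 0 and b₁,…,bₙ > 0 be real numbers. Consider the (n+1)×(n+1) real matrix J indexed by {0,1,…,n} with J_{0l} = -a₀ for all l, J_{j0} = -aⱼ, J_{jj} = -aⱼ - bⱼ, and J_{jl} = -aⱼ for 1 ≤ j ≤ n, l ≠ j. Then every complex eigenvalue of J is real and negative. -/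
/-!
Writing `S = ∑ₗ vₗ` and `B` for the diagonal part (`B₀ = 0`, `Bⱼ = bⱼ`), the eigenvalue equation
reads `(μ + Bⱼ) vⱼ = -aⱼ S` row by row. Multiplying row `j` by `conj vⱼ / aⱼ` and summing gives
`-μ = (|S|² + ∑ Bⱼ |vⱼ|²/aⱼ) / ∑ |vⱼ|²/aⱼ`. The denominator is positive because `v ≠ 0`; the
numerator because either some `vⱼ` with `Bⱼ > 0` is nonzero, or `v` is supported on the single
index with `B = 0`, and then `S ≠ 0`.
-/

open Complex ComplexConjugate Matrix

section

variable {ι : Type*} [Fintype ι]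

theorem add_mul_apply_eq_neg_mul_sum_of_mulVec_eq_smul {R : Type*} [CommRing R]
    [DecidableEq ι] {a B v : ι → R} {μ : R}
    (heig : (-vecMulVec a 1 - diagonal B) *ᵥ v = μ • v) (j : ι) :
    (μ + B j) * v j = -a j * ∑ l, v l := by
  have h := congrFun heig j
  simp only [sub_mulVec, neg_mulVec, vecMulVec_mulVec, one_dotProduct, op_smul_eq_mul,
    mulVec_diagonal, Pi.sub_apply, Pi.neg_apply, Pi.smul_apply, smul_eq_mul] at h
  linear_combination -h

theorem mul_sum_normSq_div_eq {a B : ι → ℝ} {v : ι → ℂ} {μ : ℂ} (ha : ∀ j, a j ≠ 0)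
    (hrow : ∀ j, (μ + B j) * v j = -a j * ∑ l, v l) :
    μ * ↑(∑ j, normSq (v j) / a j) =
      -↑(normSq (∑ j, v j) + ∑ j, B j * normSq (v j) / a j) := by
  have hterm : ∀ j, μ * ↑(normSq (v j) / a j) + ↑(B j * normSq (v j) / a j) =
      -(∑ l, v l) * conj (v j) := by
    intro j
    have : (a j : ℂ) ≠ 0 := ofReal_ne_zero.mpr (ha j)
    push_cast
    rw [← mul_conj]
    field_simp
    linear_combination conj (v j) * hrow j
  have hsum := Finset.sum_congr rfl fun j (_ : j ∈ Finset.univ) => hterm j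
  rw [Finset.sum_add_distrib, ← Finset.mul_sum, ← Finset.mul_sum, ← map_sum, neg_mul,
    mul_conj] at hsum
  push_cast at hsum ⊢
  linear_combination hsum

theorem sum_normSq_div_pos {a : ι → ℝ} {v : ι → ℂ} (ha : ∀ j, 0 < a j) (hv : v ≠ 0) :
    0 < ∑ j, normSq (v j) / a j := by
  obtain ⟨j, hj⟩ := Function.ne_iff.mp hv
  exact Finset.sum_pos' (fun k _ => div_nonneg (normSq_nonneg _) (ha k).le)
    ⟨j, Finset.mem_univ j, div_pos (normSq_pos.mpr hj) (ha j)⟩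

theorem normSq_sum_add_sum_mul_normSq_div_pos {a B : ι → ℝ} {v : ι → ℂ} {i₀ : ι}
    (ha : ∀ j, 0 < a j) (hB₀ : 0 ≤ B i₀) (hB : ∀ j ≠ i₀, 0 < B j) (hv : v ≠ 0) :
    0 < normSq (∑ j, v j) + ∑ j, B j * normSq (v j) / a j := by
  have hB_nonneg : ∀ j, 0 ≤ B j := fun j => by
    rcases eq_or_ne j i₀ with rfl | hj
    exacts [hB₀, (hB j hj).le]
  have hterm_nonneg : ∀ j, 0 ≤ B j * normSq (v j) / a j := fun j =>
    div_nonneg (mul_nonneg (hB_nonneg j) (normSq_nonneg _)) (ha j).le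
  by_cases hsupp : ∃ j ≠ i₀, v j ≠ 0
  · obtain ⟨j, hj, hvj⟩ := hsupp
    have : 0 < ∑ j, B j * normSq (v j) / a j := Finset.sum_pos' (fun k _ => hterm_nonneg k)
      ⟨j, Finset.mem_univ j, div_pos (mul_pos (hB j hj) (normSq_pos.mpr hvj)) (ha j)⟩
    linarith [normSq_nonneg (∑ j, v j)]
  · push Not at hsupp
    have hsum : ∑ j, v j = v i₀ :=
      Finset.sum_eq_single i₀ (fun j _ hj => hsupp j hj) (by simp)
    have hvi₀ : v i₀ ≠ 0 := fun h => hv <| funext fun j => by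
      rcases eq_or_ne j i₀ with rfl | hj
      exacts [h, hsupp j hj]
    have : 0 < normSq (∑ j, v j) := hsum ▸ normSq_pos.mpr hvi₀
    linarith [Finset.sum_nonneg fun j (_ : j ∈ Finset.univ) => hterm_nonneg j]

theorem exists_neg_real_eq_of_vecMulVec_diagonal_mulVec_eq_smul [DecidableEq ι]
    {a B : ι → ℝ} {i₀ : ι}
    (ha : ∀ j, 0 < a j) (hB₀ : 0 ≤ B i₀) (hB : ∀ j ≠ i₀, 0 < B j) {v : ι → ℂ} (hv : v ≠ 0)
    {μ : ℂ}
    (heig : (-vecMulVec (fun j => (a j : ℂ)) 1 - diagonal fun j => (B j : ℂ)) *ᵥ v = μ • v) :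
    ∃ r : ℝ, μ = r ∧ r < 0 := by
  have hQ := sum_normSq_div_pos ha hv
  have hE := normSq_sum_add_sum_mul_normSq_div_pos ha hB₀ hB hv
  have hμ := mul_sum_normSq_div_eq (fun j => (ha j).ne')
    (add_mul_apply_eq_neg_mul_sum_of_mulVec_eq_smul heig)
  refine ⟨-(normSq (∑ j, v j) + ∑ j, B j * normSq (v j) / a j) / ∑ j, normSq (v j) / a j,
    ?_, div_neg_of_neg_of_pos (neg_neg_of_pos hE) hQ⟩
  rw [ofReal_div, ofReal_neg, ← hμ, mul_div_cancel_right₀ _ (ofReal_ne_zero.mpr hQ.ne')]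

end

theorem mixed_jacobian_eigenvalues_general (n : ℕ)
    (a b : Fin (n + 1) → ℝ)
    (ha : ∀ j, 0 < a j) (hb : ∀ j, j ≠ 0 → 0 < b j)
    (J : Matrix (Fin (n + 1)) (Fin (n + 1)) ℂ)
    (hJ : ∀ j l, J j l = -(a j : ℂ) - (if j = l ∧ j ≠ 0 then (b j : ℂ) else 0))
    (μ : ℂ) (v : Fin (n + 1) → ℂ) (hv : v ≠ 0)
    (heig : J.mulVec v = μ • v) :
    ∃ r : ℝ, μ = (r : ℂ) ∧ r < 0 := by
  have hJ_eq : J = -vecMulVec (fun j => (a j : ℂ)) 1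
      - diagonal fun j => ((Function.update b 0 0 j : ℝ) : ℂ) := by
    ext j l
    rw [hJ]
    rcases eq_or_ne j l with rfl | hjl
    · rcases eq_or_ne j 0 with rfl | hj
      · simp [vecMulVec]
      · simp [vecMulVec, hj]
    · simp [vecMulVec, hjl]
  subst hJ_eq
  refine exists_neg_real_eq_of_vecMulVec_diagonal_mulVec_eq_smul (i₀ := 0) ha (by simp)
    (fun j hj => ?_) hv heig
  rw [Function.update_of_ne hj]
  exact hb j hj

theorem mixed_jacobian_eigenvalues (n : ℕ) (hn : 1 ≤ n)
    (a b : Fin (n + 1) → ℝ)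
    (ha : ∀ j, 0 < a j) (hb : ∀ j, j ≠ 0 → 0 < b j)
    (J : Matrix (Fin (n + 1)) (Fin (n + 1)) ℂ)
    (hJ : ∀ j l, J j l = -(a j : ℂ) - (if j = l ∧ j ≠ 0 then (b j : ℂ) else 0))
    (μ : ℂ) (v : Fin (n + 1) → ℂ) (hv : v ≠ 0)
    (heig : J.mulVec v = μ • v) :
    ∃ r : ℝ, μ = (r : ℂ) ∧ r < 0 :=
  mixed_jacobian_eigenvalues_general n a b ha hb J hJ μ v hv heig
end

section
/- Let q : [0,∞) → ℝ be differentiable with q'(t) ≤ ρᵐ for all t (ρᵐ > 0), and suppose there exist Q₀, θ > 0 and a sequence of times tₙ → ∞ with q(tₙ) ≥ Q₀ + θ and q(t) ≥ Q₀ for all t ≥ t_L. Let z : [0,∞) → ℝ be differentiable with z(t_L) > 0, z'(t) ≥ 0 whenever q(t) ≥ Q₀, and z'(t) ≥ C·z(t) with C > 0 whenever q(t) ≥ Q₀ + θ/2. Then z(t) → ∞ as t → ∞. -/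
/-!
Since `q' ≤ ρm`, each time `q` reaches `Q0 + θ` it has stayed above `Q0 + θ / 2` for the
preceding time `θ / (2ρm)`; there `z' ≥ C z ≥ C z(tL)`, so `z` gains at least the fixed amount
`C z(tL) θ / (2ρm)`. As `z` is nondecreasing after `tL` and such times occur arbitrarily late,
these gains accumulate and `z` diverges.
-/

open Filter Set

theorem add_half_le_of_deriv_le {q : ℝ → ℝ} {ρ a θ s t : ℝ} (hq : Differentiable ℝ q)
    (hq' : ∀ t, deriv q t ≤ ρ) (hρ : 0 < ρ) (hs : a + θ ≤ q s)
    (ht : t ∈ Icc (s - θ / (2 * ρ)) s) : a + θ / 2 ≤ q t := by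
  have hdrop : q s - q t ≤ ρ * (s - t) := image_sub_le_mul_sub_of_deriv_le hq hq' ht.2
  have hgap : ρ * (s - t) ≤ θ / 2 := by
    calc ρ * (s - t) ≤ ρ * (θ / (2 * ρ)) := by gcongr; linarith [ht.1]
      _ = θ / 2 := by field_simp
  linarith

theorem mul_sub_le_image_sub_of_mul_le_deriv {z : ℝ → ℝ} {a c u v : ℝ}
    (hz : Differentiable ℝ z) (hmono : MonotoneOn z (Ici a)) (hc : 0 ≤ c) (hau : a ≤ u)
    (huv : u ≤ v) (hz' : ∀ x ∈ Ioo u v, c * z x ≤ deriv z x) :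
    c * z a * (v - u) ≤ z v - z u := by
  refine (convex_Icc u v).mul_sub_le_image_sub_of_le_deriv hz.continuous.continuousOn
    hz.differentiableOn (fun x hx => ?_) u (left_mem_Icc.2 huv) v (right_mem_Icc.2 huv) huv
  rw [interior_Icc] at hx
  have hzx : z a ≤ z x := hmono self_mem_Ici (hau.trans hx.1.le) (hau.trans hx.1.le)
  calc c * z a ≤ c * z x := by gcongr
    _ ≤ deriv z x := hz' x hx

theorem tendsto_atTop_of_monotoneOn_of_frequently_increment {f : ℝ → ℝ} {a ε : ℝ}
    (hf : MonotoneOn f (Ici a)) (hε : 0 < ε) (hinc : ∀ B, ∃ u ≥ B, ∃ v ≥ u, f u + ε ≤ f v) :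
    Tendsto f atTop atTop := by
  have hgrow : ∀ k : ℕ, ∃ s ≥ a, f a + k • ε ≤ f s := by
    intro k
    induction k with
    | zero => exact ⟨a, le_rfl, by simp⟩
    | succ k ih =>
      obtain ⟨s, has, hs⟩ := ih
      obtain ⟨u, hsu, v, huv, hv⟩ := hinc s
      have hsu' : f s ≤ f u := hf has (has.trans hsu) hsu
      exact ⟨v, has.trans (hsu.trans huv), by rw [succ_nsmul]; linarith⟩
  refine tendsto_atTop.2 fun M => ?_
  obtain ⟨k, hk⟩ := Archimedean.arch (M - f a) hε
  obtain ⟨s, has, hs⟩ := hgrow k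
  filter_upwards [eventually_ge_atTop s] with t hst
  linarith [hf has (has.trans hst) hst]

theorem biomass_divergence (q z : ℝ → ℝ) (ρm Q0 θ tL C : ℝ)
    (hρm : 0 < ρm) (hθ : 0 < θ) (hC : 0 < C)
    (hqdiff : Differentiable ℝ q) (hzdiff : Differentiable ℝ z)
    (hqder : ∀ t, deriv q t ≤ ρm)
    (tn : ℕ → ℝ) (htn : Filter.Tendsto tn Filter.atTop Filter.atTop)
    (hqtn : ∀ n, q (tn n) ≥ Q0 + θ)
    (hqlow : ∀ t ≥ tL, q t ≥ Q0)
    (hzL : 0 < z tL)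
    (hz1 : ∀ t, q t ≥ Q0 → deriv z t ≥ 0)
    (hz2 : ∀ t, q t ≥ Q0 + θ / 2 → deriv z t ≥ C * z t) :
    Filter.Tendsto z Filter.atTop Filter.atTop := by
  set δ := θ / (2 * ρm)
  have hδ : 0 < δ := by positivity
  have hz_mono : MonotoneOn z (Ici tL) := by
    refine monotoneOn_of_deriv_nonneg (convex_Ici tL) hzdiff.continuous.continuousOn
      hzdiff.differentiableOn fun x hx => hz1 x (hqlow x ?_)
    rw [interior_Ici] at hx
    exact le_of_lt hx
  refine tendsto_atTop_of_monotoneOn_of_frequently_increment hz_mono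
    (by positivity : 0 < C * z tL * δ) fun B => ?_
  obtain ⟨n, hn⟩ := (htn.eventually_ge_atTop (max B tL + δ)).exists
  have hgain := mul_sub_le_image_sub_of_mul_le_deriv hzdiff hz_mono hC.le
    (by linarith [le_max_right B tL]) (by linarith : tn n - δ ≤ tn n)
    fun x hx => hz2 x (add_half_le_of_deriv_le hqdiff hqder hρm (hqtn n) (Ioo_subset_Icc_self hx))
  exact ⟨tn n - δ, by linarith [le_max_left B tL], tn n, by linarith, by linarith⟩
end
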